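/- Let G be a (1,0)-stable graph and A a maximum independent set in G. Then Hall's condition holds from A to V(G) \ A: for every nonempty subset Z ⊆ A, the neighborhood N(Z) (contained in V(G) \ A) satisfies |N(Z)| ≥ |Z|. -/

import Mathlib

open SimpleGraph

/-- The independence number of a graph: the clique number of its complement. -/
noncomputable def indepNum {V : Type*} (G : SimpleGraph V) : ℕ := Gᶜ.cliqueNum

lemma indep_card_le {V : Type*} [Fintype V] (G : SimpleGraph V) {S : Finset V}
    (h : Gᶜ.IsClique (S : Set V)) : S.card ≤ _root_.indepNum G :=
  IsClique.card_le_cliqueNum (tc := h)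

lemma exists_max_indep_avoiding {V : Type*} [Fintype V] (G : SimpleGraph V)
    (hstable : ∀ v : V, _root_.indepNum (G.induce ({v}ᶜ : Set V)) = _root_.indepNum G) (v : V) :
    ∃ B : Finset V, Gᶜ.IsClique (B : Set V) ∧ B.card = _root_.indepNum G ∧ v ∉ B := by
  classical
  haveI : Fintype ({v}ᶜ : Set V) := Fintype.ofFinite _
  obtain ⟨B₀, hB₀⟩ := (G.induce ({v}ᶜ : Set V))ᶜ.exists_isNClique_cliqueNum
  refine ⟨B₀.image Subtype.val, ?_, ?_, ?_⟩
  · intro a ha b hb hne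
    simp only [Finset.coe_image, Set.mem_image, Finset.mem_coe] at ha hb
    obtain ⟨a₀, ha₀, rfl⟩ := ha
    obtain ⟨b₀, hb₀, rfl⟩ := hb
    have hne₀ : a₀ ≠ b₀ := fun h => hne (by rw [h])
    have := hB₀.isClique ha₀ hb₀ hne₀
    rw [compl_adj] at this ⊢
    exact ⟨hne, fun hadj => this.2 hadj⟩
  · rw [Finset.card_image_of_injective _ Subtype.val_injective, hB₀.card_eq]
    exact hstable v
  · simp only [Finset.mem_image, not_exists]
    rintro ⟨x, hx⟩ ⟨_, h⟩
    exact hx h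

lemma key {V : Type*} [Fintype V] (G : SimpleGraph V)
    (hstable : ∀ v : V, _root_.indepNum (G.induce ({v}ᶜ : Set V)) = _root_.indepNum G) :
    ∀ n : ℕ, ∀ B : Finset V, Gᶜ.IsClique (B : Set V) → B.card = _root_.indepNum G →
      ∀ Z : Finset V, Z ⊆ B → Z.Nonempty → Z.card = n →
      Z.card ≤ {v : V | ∃ z ∈ Z, G.Adj z v}.ncard := by
  classical
  intro n
  induction n using Nat.strong_induction_on with
  | _ n IH =>
  intro B hBind hBcard Z hZB hZne hZn
  set NZ : Finset V := Finset.univ.filter (fun v : V => ∃ z ∈ Z, G.Adj z v) with hNZdef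
  have hmemNZ : ∀ v : V, v ∈ NZ ↔ ∃ z ∈ Z, G.Adj z v := by
    intro v; simp [hNZdef]
  have hgoal : {v : V | ∃ z ∈ Z, G.Adj z v}.ncard = NZ.card := by
    rw [show {v : V | ∃ z ∈ Z, G.Adj z v} = (NZ : Set V) by ext v; simp [hmemNZ],
      Set.ncard_coe_finset]
  rw [hgoal]
  by_contra hlt
  push_neg at hlt
  -- Z and NZ are disjoint
  have hdisj : Disjoint Z NZ := by
    rw [Finset.disjoint_right]
    intro v hvN hvZ
    obtain ⟨z, hzZ, hadj⟩ := (hmemNZ v).mp hvN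
    have hne : z ≠ v := hadj.ne
    have := hBind (hZB hzZ) (hZB hvZ) hne
    rw [compl_adj] at this
    exact this.2 hadj
  obtain ⟨z, hz⟩ := hZne
  obtain ⟨B', hB'ind, hB'card, hzB'⟩ := exists_max_indep_avoiding G hstable z
  -- the swapped independent set
  have hA'ind : Gᶜ.IsClique ((((B' \ (Z ∪ NZ)) ∪ Z : Finset V)) : Set V) := by
    intro a ha b hb hne
    simp only [Finset.coe_union, Finset.coe_sdiff, Set.mem_union, Set.mem_diff,
      Finset.mem_coe, Finset.mem_union] at ha hb
    rw [compl_adj]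
    refine ⟨hne, ?_⟩
    rcases ha with ⟨haB', haN⟩ | haZ
    · rcases hb with ⟨hbB', hbN⟩ | hbZ
      · have := hB'ind haB' hbB' hne
        rw [compl_adj] at this; exact this.2
      · intro hadj
        exact haN (Or.inr ((hmemNZ a).mpr ⟨b, hbZ, hadj.symm⟩))
    · rcases hb with ⟨hbB', hbN⟩ | hbZ
      · intro hadj
        exact hbN (Or.inr ((hmemNZ b).mpr ⟨a, haZ, hadj⟩))
      · have := hBind (hZB haZ) (hZB hbZ) hne
        rw [compl_adj] at this; exact this.2
  have hA'card : ((B' \ (Z ∪ NZ)) ∪ Z).card ≤ _root_.indepNum G := indep_card_le G hA'ind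
  have hdisj2 : Disjoint (B' \ (Z ∪ NZ)) Z := by
    rw [Finset.disjoint_right]
    intro v hvZ hv
    exact (Finset.mem_sdiff.mp hv).2 (Finset.mem_union_left _ hvZ)
  have e1 : ((B' \ (Z ∪ NZ)) ∪ Z).card = (B' \ (Z ∪ NZ)).card + Z.card :=
    Finset.card_union_of_disjoint hdisj2
  have e2 : (B' \ (Z ∪ NZ)).card + (B' ∩ (Z ∪ NZ)).card = B'.card :=
    Finset.card_sdiff_add_card_inter _ _
  have e3 : B' ∩ (Z ∪ NZ) = (B' ∩ Z) ∪ (B' ∩ NZ) := Finset.inter_union_distrib_left _ _ _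
  have e4 : (B' ∩ (Z ∪ NZ)).card = (B' ∩ Z).card + (B' ∩ NZ).card := by
    rw [e3]
    exact Finset.card_union_of_disjoint (hdisj.mono (Finset.inter_subset_right)
      (Finset.inter_subset_right))
  -- the key counting inequality
  have hkey : Z.card ≤ (B' ∩ Z).card + (B' ∩ NZ).card := by
    omega
  have hBN_le : (B' ∩ NZ).card ≤ NZ.card := Finset.card_le_card Finset.inter_subset_right
  rcases Finset.eq_empty_or_nonempty (B' ∩ Z) with hW | hWne
  · rw [hW] at hkey
    simp at hkey
    omega
  · -- recurse on W := B' ∩ Z inside B'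
    set W : Finset V := B' ∩ Z with hWdef
    have hWZ : W ⊆ Z.erase z := by
      intro w hw
      rw [Finset.mem_erase]
      exact ⟨fun h => hzB' (h ▸ (Finset.mem_inter.mp hw).1), (Finset.mem_inter.mp hw).2⟩
    have hWlt : W.card < n := by
      have h1 := Finset.card_le_card hWZ
      have h2 := Finset.card_erase_of_mem hz
      have h3 : Z.card ≥ 1 := Finset.card_pos.mpr ⟨z, hz⟩
      omega
    have hIH := IH W.card hWlt B' hB'ind hB'card W Finset.inter_subset_left hWne rfl
    set NW : Finset V := Finset.univ.filter (fun v : V => ∃ w ∈ W, G.Adj w v) with hNWdef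
    have hIH' : W.card ≤ NW.card := by
      rwa [show {v : V | ∃ w ∈ W, G.Adj w v} = (NW : Set V) by ext v; simp [hNWdef],
        Set.ncard_coe_finset] at hIH
    have hNWsub : NW ⊆ NZ \ B' := by
      intro v hv
      simp only [hNWdef, Finset.mem_filter] at hv
      obtain ⟨-, w, hwW, hadj⟩ := hv
      have hwB' : w ∈ B' := (Finset.mem_inter.mp hwW).1
      have hwZ : w ∈ Z := (Finset.mem_inter.mp hwW).2
      rw [Finset.mem_sdiff]
      refine ⟨(hmemNZ v).mpr ⟨w, hwZ, hadj⟩, fun hvB' => ?_⟩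
      have := hB'ind hwB' hvB' hadj.ne
      rw [compl_adj] at this
      exact this.2 hadj
    have e5 : (NZ \ B').card + (NZ ∩ B').card = NZ.card :=
      Finset.card_sdiff_add_card_inter _ _
    have e6 : (NZ ∩ B').card = (B' ∩ NZ).card := by rw [Finset.inter_comm]
    have e7 := Finset.card_le_card hNWsub
    omega

/-- In a `(1,0)`-stable graph, Hall's condition holds from a maximum independent set `A`
to its complement: every nonempty `Z ⊆ A` has `|N(Z)| ≥ |Z|`. -/
theorem stmt2 {V : Type*} [Fintype V] (G : SimpleGraph V)
    (hstable : ∀ v : V, _root_.indepNum (G.induce ({v}ᶜ : Set V)) = _root_.indepNum G)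
    (A : Finset V) (hAind : Gᶜ.IsClique (A : Set V)) (hAmax : A.card = _root_.indepNum G) :
    ∀ Z : Finset V, Z ⊆ A → Z.Nonempty →
      (Z.card : ℕ) ≤ {v : V | ∃ z ∈ Z, G.Adj z v}.ncard := fun Z hZA hZne =>
  key G hstable Z.card A hAind hAmax Z hZA hZne rfl
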